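/- arXiv:1703.05715 — 2 statements merged into one kernel-verified Lean document; each statement's English description precedes it below -/
import Mathlib

section
/- Let W be an irreducible Markov generator, W̃ the HTR generator, and F̃ = log(W_{12} p^st_2 / (W_{21} p^st_1)) the effective affinity. For any oriented cycle C containing the edge 1←2 exactly once, the HTR cycle affinity satisfies F_{W̃}(C) = 2F̃ − F_W(C). -/
/-!
On every edge other than the observable one, the HTR generator reverses the edge and tilts it by
the potential `log pst`, so there its log-ratio is `2 Δ log pst` minus that of `W`. Around a
cycle the potential differences telescope away, and only the observable edge `1 → 0`, where `W̃`
agrees with `W`, leaves a defect, which is `2F̃`.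
-/

/-- A generator is irreducible if any two distinct states are connected by a
chain of transitions with strictly positive rates (column = source state). -/
def MatrixIrreducible {n : ℕ} (W : Matrix (Fin n) (Fin n) ℝ) : Prop :=
  ∀ i j : Fin n, i ≠ j → ∃ k : ℕ, ∃ c : Fin (k + 1) → Fin n,
    c 0 = j ∧ c (Fin.last k) = i ∧
    ∀ m : Fin k, 0 < W (c m.succ) (c m.castSucc)

theorem Fin.sum_succ_sub_castSucc {M : Type*} [AddCommGroup M] {k : ℕ} (G : Fin (k + 1) → M) :
    ∑ s : Fin k, (G s.succ - G s.castSucc) = G (Fin.last k) - G 0 := by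
  rw [Finset.sum_sub_distrib, sub_eq_sub_iff_add_eq_add, add_comm,
    ← Fin.sum_univ_succ, Fin.sum_univ_castSucc, add_comm]

theorem Fin.sum_succ_sub_castSucc_of_cycle {M : Type*} [AddCommGroup M] {ι : Type*} {k : ℕ}
    (φ : ι → M) {c : Fin (k + 1) → ι} (hcyc : c (Fin.last k) = c 0) :
    ∑ s : Fin k, (φ (c s.succ) - φ (c s.castSucc)) = 0 := by
  rw [Fin.sum_succ_sub_castSucc fun i => φ (c i), hcyc, sub_self]

/-- The affinity of the transition `i → j`; the column of a rate is its source state. -/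
noncomputable def edgeAffinity {ι : Type*} (A : Matrix ι ι ℝ) (i j : ι) : ℝ :=
  Real.log (A j i / A i j)

theorem edgeAffinity_of_tilted_transpose {ι : Type*} {A B : Matrix ι ι ℝ} {p : ι → ℝ} {i j : ι}
    (hij : 0 < A i j) (hji : 0 < A j i) (hpi : 0 < p i) (hpj : 0 < p j)
    (hBji : B j i = A i j * p j / p i) (hBij : B i j = A j i * p i / p j) :
    edgeAffinity B i j = 2 * (Real.log (p j) - Real.log (p i)) - edgeAffinity A i j := by
  have hratio : B j i / B i j = (p j / p i) ^ 2 / (A j i / A i j) := by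
    rw [hBji, hBij]
    field_simp
  rw [edgeAffinity, edgeAffinity, hratio, Real.log_div (by positivity) (by positivity),
    Real.log_pow, Real.log_div hpj.ne' hpi.ne']
  push_cast
  ring

theorem sum_cycle_eq_defect_sub_sum {ι : Type*} {k : ℕ} {c : Fin (k + 1) → ι}
    (hcyc : c (Fin.last k) = c 0) (f g : Fin k → ℝ) (φ : ι → ℝ) (s₀ : Fin k)
    (hf : ∀ s, s ≠ s₀ → f s + g s = 2 * (φ (c s.succ) - φ (c s.castSucc))) :
    ∑ s, f s = f s₀ + g s₀ - 2 * (φ (c s₀.succ) - φ (c s₀.castSucc)) - ∑ s, g s := by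
  have hdefect : ∑ s, (f s + g s - 2 * (φ (c s.succ) - φ (c s.castSucc))) =
      f s₀ + g s₀ - 2 * (φ (c s₀.succ) - φ (c s₀.castSucc)) :=
    Finset.sum_eq_single s₀ (fun s _ hs => sub_eq_zero.2 (hf s hs))
      (fun h => absurd (Finset.mem_univ s₀) h)
  rw [Finset.sum_sub_distrib, Finset.sum_add_distrib, ← Finset.mul_sum,
    Fin.sum_succ_sub_castSucc_of_cycle φ hcyc] at hdefect
  linarith

theorem HTR_cycle_affinity_observable_general {m : ℕ}
    (W Wtil : Matrix (Fin (m + 3)) (Fin (m + 3)) ℝ)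
    (pst : Fin (m + 3) → ℝ) (hpst : ∀ i, 0 < pst i)
    (h12pos : 0 < W 0 1) (h21pos : 0 < W 1 0)
    (hWtil12 : Wtil 0 1 = W 0 1) (hWtil21 : Wtil 1 0 = W 1 0)
    (hWtil : ∀ i j : Fin (m + 3), i ≠ j →
      ¬((i = 0 ∧ j = 1) ∨ (i = 1 ∧ j = 0)) →
      Wtil i j = W j i * pst i / pst j)
    (k : ℕ) (c : Fin (k + 1) → Fin (m + 3))
    (hcyc : c (Fin.last k) = c 0)
    (hdist : ∀ s : Fin k, c s.castSucc ≠ c s.succ)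
    (honce : ∃! s : Fin k, c s.castSucc = 1 ∧ c s.succ = 0)
    (hnorev : ∀ s : Fin k, ¬(c s.castSucc = 0 ∧ c s.succ = 1))
    (hposfwd : ∀ s : Fin k, 0 < W (c s.succ) (c s.castSucc))
    (hposbwd : ∀ s : Fin k, 0 < W (c s.castSucc) (c s.succ)) :
    ∑ s : Fin k, Real.log (Wtil (c s.succ) (c s.castSucc) /
        Wtil (c s.castSucc) (c s.succ)) =
    2 * Real.log (W 0 1 * pst 1 / (W 1 0 * pst 0)) -
      ∑ s : Fin k, Real.log (W (c s.succ) (c s.castSucc) /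
        W (c s.castSucc) (c s.succ)) := by
  obtain ⟨s₀, ⟨hs₀src, hs₀tgt⟩, hs₀uniq⟩ := honce
  have hunobserved : ∀ s, s ≠ s₀ →
      edgeAffinity Wtil (c s.castSucc) (c s.succ) + edgeAffinity W (c s.castSucc) (c s.succ) =
        2 * (Real.log (pst (c s.succ)) - Real.log (pst (c s.castSucc))) := by
    intro s hs
    have hfwd := hWtil _ _ (hdist s).symm (by
      rintro (⟨h0, h1⟩ | ⟨h1, h0⟩)
      exacts [hs (hs₀uniq s ⟨h1, h0⟩), hnorev s ⟨h0, h1⟩])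
    have hbwd := hWtil _ _ (hdist s) (by
      rintro (⟨h0, h1⟩ | ⟨h1, h0⟩)
      exacts [hnorev s ⟨h0, h1⟩, hs (hs₀uniq s ⟨h1, h0⟩)])
    rw [edgeAffinity_of_tilted_transpose (hposbwd s) (hposfwd s) (hpst _) (hpst _) hfwd hbwd]
    ring
  have hsum := sum_cycle_eq_defect_sub_sum hcyc
    (fun s => edgeAffinity Wtil (c s.castSucc) (c s.succ))
    (fun s => edgeAffinity W (c s.castSucc) (c s.succ)) (fun i => Real.log (pst i)) s₀ hunobserved
  have hFtil : Real.log (W 0 1 * pst 1 / (W 1 0 * pst 0)) =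
      Real.log (W 0 1 / W 1 0) + (Real.log (pst 1) - Real.log (pst 0)) := by
    rw [mul_div_mul_comm, Real.log_mul (div_pos h12pos h21pos).ne' (div_pos (hpst 1) (hpst 0)).ne',
      Real.log_div (hpst 1).ne' (hpst 0).ne']
  simp only [edgeAffinity, hs₀src, hs₀tgt, hWtil12, hWtil21] at hsum
  rw [hsum, hFtil]
  ring

/-- Theorem 5b: along any cycle traversing the observable edge
`1 ← 2` (i.e. the transition from index `1` to index `0`) exactly once and
never in the reverse direction, the HTR cycle affinity is `2F̃ − F(C)` where
`F̃ = log(W₁₂ pst₂ / (W₂₁ pst₁))` is the effective affinity. -/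
theorem HTR_cycle_affinity_observable {m : ℕ}
    (W Wtil : Matrix (Fin (m + 3)) (Fin (m + 3)) ℝ)
    (hoff : ∀ i j : Fin (m + 3), i ≠ j → 0 ≤ W i j)
    (hcol : ∀ j : Fin (m + 3), ∑ i : Fin (m + 3), W i j = 0)
    (hirr : MatrixIrreducible W)
    (pst : Fin (m + 3) → ℝ) (hpst : ∀ i, 0 < pst i)
    (h12pos : 0 < W 0 1) (h21pos : 0 < W 1 0)
    (hWtil12 : Wtil 0 1 = W 0 1) (hWtil21 : Wtil 1 0 = W 1 0)
    (hWtil : ∀ i j : Fin (m + 3), i ≠ j →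
      ¬((i = 0 ∧ j = 1) ∨ (i = 1 ∧ j = 0)) →
      Wtil i j = W j i * pst i / pst j)
    (k : ℕ) (c : Fin (k + 1) → Fin (m + 3))
    (hcyc : c (Fin.last k) = c 0)
    (hdist : ∀ s : Fin k, c s.castSucc ≠ c s.succ)
    (honce : ∃! s : Fin k, c s.castSucc = 1 ∧ c s.succ = 0)
    (hnorev : ∀ s : Fin k, ¬(c s.castSucc = 0 ∧ c s.succ = 1))
    (hposfwd : ∀ s : Fin k, 0 < W (c s.succ) (c s.castSucc))
    (hposbwd : ∀ s : Fin k, 0 < W (c s.castSucc) (c s.succ)) :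
    ∑ s : Fin k, Real.log (Wtil (c s.succ) (c s.castSucc) /
        Wtil (c s.castSucc) (c s.succ)) =
    2 * Real.log (W 0 1 * pst 1 / (W 1 0 * pst 0)) -
      ∑ s : Fin k, Real.log (W (c s.succ) (c s.castSucc) /
        W (c s.castSucc) (c s.succ)) :=
  HTR_cycle_affinity_observable_general W Wtil pst hpst h12pos h21pos hWtil12 hWtil21 hWtil k c hcyc
    hdist honce hnorev hposfwd hposbwd
end

section
/- If the effective affinity vanishes, F̃ = 0 (i.e., W_{12} p^st_2 = W_{21} p^st_1, the stalling/marginal detailed balance condition), then the HTR generator coincides with the full time reversal with respect to p^st: W̃ = P_st Wᵀ P_st⁻¹, and moreover p^st is a steady state of W itself: W p^st = 0. -/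
/-!
Write `D := W - Wst`. The stalling construction only touches the `{1, 2}` block, so `D` is
supported there, has zero column sums, and its off-diagonal entries are `W₁₂, W₂₁`. The
condition `W₁₂ p₂ = W₂₁ p₁` says exactly that `D` is in detailed balance with `p`, i.e. fixed by
the time reversal `A ↦ P Aᵀ P⁻¹`. Since time reversal is additive,
`P Wᵀ P⁻¹ = P Dᵀ P⁻¹ + P Wstᵀ P⁻¹ = D + P Wstᵀ P⁻¹ = W̃`. Detailed balance together with zero
column sums gives `D p = 0`, hence `W p = D p + Wst p = 0`.
-/

open Matrix

variable {n : Type*}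

namespace Matrix

/-- Detailed balance of the rate matrix `A` with respect to `p`: `A i j` is the rate `j → i`. -/
def IsReversible (A : Matrix n n ℝ) (p : n → ℝ) : Prop :=
  ∀ i j, A i j * p j = A j i * p i

theorem isReversible_of_support_subset_pair {A : Matrix n n ℝ} {p : n → ℝ} {a b : n}
    (hsupp : ∀ i j, ¬((i = a ∨ i = b) ∧ (j = a ∨ j = b)) → A i j = 0)
    (hab : A a b * p b = A b a * p a) : A.IsReversible p := by
  intro i j
  by_cases hij : (i = a ∨ i = b) ∧ (j = a ∨ j = b)
  · obtain ⟨rfl | rfl, rfl | rfl⟩ := hij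
    exacts [rfl, hab, hab.symm, rfl]
  · rw [hsupp i j hij, hsupp j i fun hji => hij hji.symm, zero_mul, zero_mul]

variable [Fintype n]

theorem IsReversible.mulVec_eq_zero {A : Matrix n n ℝ} {p : n → ℝ} (hA : A.IsReversible p)
    (hcol : ∀ j, ∑ i, A i j = 0) : A *ᵥ p = 0 := by
  ext i
  calc (A *ᵥ p) i = ∑ j, A j i * p i := Finset.sum_congr rfl fun j _ => hA i j
    _ = 0 := by rw [← Finset.sum_mul, hcol i, zero_mul]

theorem sum_apply_eq_zero_of_support_subset_pair {A : Matrix n n ℝ} {a b : n} (hne : a ≠ b)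
    (hsupp : ∀ i j, ¬((i = a ∨ i = b) ∧ (j = a ∨ j = b)) → A i j = 0)
    (hcol_a : A a a + A b a = 0) (hcol_b : A a b + A b b = 0) (j : n) : ∑ i, A i j = 0 := by
  by_cases hj : j = a ∨ j = b
  · rw [Fintype.sum_eq_add a b hne fun i hi => hsupp i j fun h => h.1.elim hi.1 hi.2]
    rcases hj with rfl | rfl
    exacts [hcol_a, hcol_b]
  · exact Finset.sum_eq_zero fun i _ => hsupp i j fun h => hj h.2

variable [DecidableEq n]

noncomputable def timeReversal (p : n → ℝ) (A : Matrix n n ℝ) : Matrix n n ℝ :=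
  diagonal p * Aᵀ * diagonal fun k => (p k)⁻¹

theorem timeReversal_apply (p : n → ℝ) (A : Matrix n n ℝ) (i j : n) :
    timeReversal p A i j = p i * A j i * (p j)⁻¹ := by
  rw [timeReversal, mul_diagonal, diagonal_mul, transpose_apply]

theorem timeReversal_add (p : n → ℝ) (A B : Matrix n n ℝ) :
    timeReversal p (A + B) = timeReversal p A + timeReversal p B := by
  rw [timeReversal, timeReversal, timeReversal, transpose_add, mul_add, add_mul]

theorem IsReversible.timeReversal_eq {A : Matrix n n ℝ} {p : n → ℝ} (hA : A.IsReversible p)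
    (hp : ∀ i, p i ≠ 0) : timeReversal p A = A := by
  ext i j
  rw [timeReversal_apply, mul_comm (p i), ← hA i j, mul_inv_cancel_right₀ (hp j)]

end Matrix

section Stalling

variable {W Wst : Matrix n n ℝ} {a b : n}

theorem sub_apply_eq_zero_of_stalling
    (hother : ∀ i j, ¬((i = a ∧ j = b) ∨ (i = b ∧ j = a) ∨ (i = a ∧ j = a) ∨ (i = b ∧ j = b)) →
      Wst i j = W i j)
    (i j : n) (hij : ¬((i = a ∨ i = b) ∧ (j = a ∨ j = b))) : (W - Wst) i j = 0 :=
  sub_eq_zero.2 (hother i j (by tauto)).symm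

theorem isReversible_sub_of_stalling {p : n → ℝ}
    (hother : ∀ i j, ¬((i = a ∧ j = b) ∨ (i = b ∧ j = a) ∨ (i = a ∧ j = a) ∨ (i = b ∧ j = b)) →
      Wst i j = W i j)
    (hab : Wst a b = 0) (hba : Wst b a = 0) (hstall : W a b * p b = W b a * p a) :
    (W - Wst).IsReversible p :=
  isReversible_of_support_subset_pair (sub_apply_eq_zero_of_stalling hother)
    (by rw [Matrix.sub_apply, Matrix.sub_apply, hab, hba, sub_zero, sub_zero, hstall])

theorem sum_sub_apply_eq_zero_of_stalling [Fintype n] (hne : a ≠ b)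
    (hother : ∀ i j, ¬((i = a ∧ j = b) ∨ (i = b ∧ j = a) ∨ (i = a ∧ j = a) ∨ (i = b ∧ j = b)) →
      Wst i j = W i j)
    (hab : Wst a b = 0) (hba : Wst b a = 0)
    (haa : Wst a a = W a a + W b a) (hbb : Wst b b = W b b + W a b) (j : n) :
    ∑ i, (W - Wst) i j = 0 :=
  sum_apply_eq_zero_of_support_subset_pair hne (sub_apply_eq_zero_of_stalling hother)
    (by simp only [Matrix.sub_apply, haa, hba]; ring) (by simp only [Matrix.sub_apply, hab, hbb]; ring) j

end Stalling

theorem marginal_detailed_balance_general {m : ℕ}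
    (W Wst : Matrix (Fin (m + 3)) (Fin (m + 3)) ℝ)
    (h12 : Wst 0 1 = 0) (h21 : Wst 1 0 = 0)
    (h11 : Wst 0 0 = W 0 0 + W 1 0) (h22 : Wst 1 1 = W 1 1 + W 0 1)
    (hother : ∀ i j : Fin (m + 3),
      ¬((i = 0 ∧ j = 1) ∨ (i = 1 ∧ j = 0) ∨ (i = 0 ∧ j = 0) ∨ (i = 1 ∧ j = 1)) →
      Wst i j = W i j)
    (pst : Fin (m + 3) → ℝ) (hpst : ∀ i, 0 < pst i)
    (hsteady : Wst.mulVec pst = 0)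
    (hstall : W 0 1 * pst 1 = W 1 0 * pst 0) :
    (W - Wst + Matrix.diagonal pst * Wst.transpose *
        Matrix.diagonal (fun i => (pst i)⁻¹)) =
      Matrix.diagonal pst * W.transpose * Matrix.diagonal (fun i => (pst i)⁻¹) ∧
    W.mulVec pst = 0 := by
  have hrev : (W - Wst).IsReversible pst := isReversible_sub_of_stalling hother h12 h21 hstall
  have hcol := sum_sub_apply_eq_zero_of_stalling zero_ne_one hother h12 h21 h11 h22
  constructor
  · change W - Wst + timeReversal pst Wst = timeReversal pst W
    conv_rhs => rw [← sub_add_cancel W Wst, timeReversal_add]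
    rw [hrev.timeReversal_eq fun i => (hpst i).ne']
  · rw [← sub_add_cancel W Wst, add_mulVec, hrev.mulVec_eq_zero hcol, hsteady, add_zero]

/-- marginal detailed balance: if the effective affinity
vanishes, i.e. `W₁₂ pst₂ = W₂₁ pst₁`, then the HTR generator
`W̃ = W − Wst + Pst Wstᵀ Pst⁻¹` coincides with the full time reversal
`Pst Wᵀ Pst⁻¹`, and `pst` is a steady state of `W` itself.
States `1,2` are indices `0,1`. -/
theorem marginal_detailed_balance {m : ℕ}
    (W Wst : Matrix (Fin (m + 3)) (Fin (m + 3)) ℝ)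
    (hoff : ∀ i j : Fin (m + 3), i ≠ j → 0 ≤ W i j)
    (hcol : ∀ j : Fin (m + 3), ∑ i : Fin (m + 3), W i j = 0)
    (h12 : Wst 0 1 = 0) (h21 : Wst 1 0 = 0)
    (h11 : Wst 0 0 = W 0 0 + W 1 0) (h22 : Wst 1 1 = W 1 1 + W 0 1)
    (hother : ∀ i j : Fin (m + 3),
      ¬((i = 0 ∧ j = 1) ∨ (i = 1 ∧ j = 0) ∨ (i = 0 ∧ j = 0) ∨ (i = 1 ∧ j = 1)) →
      Wst i j = W i j)
    (pst : Fin (m + 3) → ℝ) (hpst : ∀ i, 0 < pst i)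
    (hsteady : Wst.mulVec pst = 0)
    (hstall : W 0 1 * pst 1 = W 1 0 * pst 0) :
    (W - Wst + Matrix.diagonal pst * Wst.transpose *
        Matrix.diagonal (fun i => (pst i)⁻¹)) =
      Matrix.diagonal pst * W.transpose * Matrix.diagonal (fun i => (pst i)⁻¹) ∧
    W.mulVec pst = 0 :=
  marginal_detailed_balance_general W Wst h12 h21 h11 h22 hother pst hpst hsteady hstall
end
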